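/- arXiv:cs/0410017 — 2 statements merged into one kernel-verified Lean document; each statement's English description precedes it below -/
import Mathlib

section
/- Let σ be a bi-infinite string of period N over a finite alphabet Σ, and let D_1,…,D_n be finite automata with m := max_i |S(D_i)|. Then every maximal substring σ_{a,b} of σ (maximal with respect to inclusion among substrings accepted by some D_i) has length at most m·N, unless the unique maximal substring is the whole bi-infinite string σ itself. -/
/-!
In fact the first alternative always holds. If an automaton with at most `m` states accepts
`σ_{a,b}` with `b - a + 1 > m·N`, its accepting run visits the same state at two of the
positions `0, N, …, m·N`, say `iN < jN`. Running the loop between them twice accepts a word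
which, by `N`-periodicity of `σ`, is `σ_{a, b + (j - i)N}`; so `σ_{a,b}` was not maximal.
-/

/-- A (nondeterministic) finite-state automaton with start states, final states
and a transition relation. -/
structure Auto (S A : Type) where
  start : Set S
  final : Set S
  trans : Set (S × A × S)

namespace Auto

variable {S A : Type}

/-- `Run M s w t`: there is a path through `M` from `s` to `t` labeled by `w`. -/
inductive Run (M : Auto S A) : S → List A → S → Prop
  | nil (s : S) : Run M s [] s
  | cons {s t u : S} {a : A} {w : List A} :
      (s, a, t) ∈ M.trans → Run M t w u → Run M s (a :: w) u

/-- `M` accepts `w` if some path labeled `w` leads from a start state to a final state. -/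
def Accepts (M : Auto S A) (w : List A) : Prop :=
  ∃ s t, s ∈ M.start ∧ t ∈ M.final ∧ M.Run s w t

def Lang (M : Auto S A) : Set (List A) := {w | M.Accepts w}

/-- Deterministic: unique start state and the transition relation is a partial
function of (state, letter). -/
def Deterministic (M : Auto S A) : Prop :=
  (∃! s, s ∈ M.start) ∧
    ∀ s a t t', (s, a, t) ∈ M.trans → (s, a, t') ∈ M.trans → t = t'

end Auto

/-- `word σ a b = σ_a σ_{a+1} ⋯ σ_b` for a bi-infinite string `σ`. -/
def word {A : Type} (σ : ℤ → A) (a b : ℤ) : List A :=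
  (List.range (b - a + 1).toNat).map fun k => σ (a + k)


namespace Auto

variable {S A : Type} {M : Auto S A}

theorem Run.append {s r t : S} {u v : List A} (hu : M.Run s u r) (hv : M.Run r v t) :
    M.Run s (u ++ v) t := by
  induction hu with
  | nil => exact hv
  | cons htr _ ih => exact Run.cons htr (ih hv)

theorem Run.exists_trace {s t : S} {w : List A} (h : M.Run s w t) :
    ∃ f : ℕ → S, f 0 = s ∧ f w.length = t ∧
      ∀ k (hk : k < w.length), (f k, w[k], f (k + 1)) ∈ M.trans := by
  induction h with
  | nil s => exact ⟨fun _ => s, rfl, rfl, fun k hk => absurd hk (Nat.not_lt_zero k)⟩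
  | @cons s _ _ _ _ htr _ ih =>
    obtain ⟨f, hf0, hflen, hftrans⟩ := ih
    refine ⟨fun k => Nat.casesOn k s f, rfl, hflen, ?_⟩
    rintro (_ | k) hk
    · simpa [hf0] using htr
    · exact hftrans k (by simpa using hk)

theorem Run.of_trace {w : List A} {f : ℕ → S}
    (hf : ∀ k (hk : k < w.length), (f k, w[k], f (k + 1)) ∈ M.trans) {i j : ℕ}
    (hij : i ≤ j) (hj : j ≤ w.length) : M.Run (f i) ((w.take j).drop i) (f j) := by
  induction w generalizing f i j with
  | nil =>
    obtain rfl : j = 0 := by simpa using hj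
    obtain rfl : i = 0 := by omega
    exact Run.nil _
  | cons a w ih =>
    have hf' : ∀ k (hk : k < w.length), (f (k + 1), w[k], f (k + 1 + 1)) ∈ M.trans :=
      fun k hk => hf (k + 1) (by simpa using hk)
    rcases j with _ | j
    · obtain rfl : i = 0 := by omega
      exact Run.nil _
    rcases i with _ | i
    · exact Run.cons (hf 0 (Nat.succ_pos _)) (ih hf' (Nat.zero_le j) (by simpa using hj))
    · simpa using ih hf' (by omega) (by simpa using hj)

/-- Pigeonhole: two of the `card S + 1` cut points `p k` carry the same state of the run. -/
theorem Run.pump [Fintype S] {s t : S} {w : List A} (h : M.Run s w t) (p : ℕ → ℕ)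
    (hp : ∀ k ≤ Fintype.card S, p k ≤ w.length) :
    ∃ i j, i < j ∧ j ≤ Fintype.card S ∧ M.Run s (w.take (p j) ++ w.drop (p i)) t := by
  obtain ⟨f, rfl, rfl, hf⟩ := h.exists_trace
  have hrun : ∀ i j : Fin (Fintype.card S + 1), f (p i) = f (p j) →
      M.Run (f 0) (w.take (p j) ++ w.drop (p i)) (f w.length) := by
    intro i j hij
    have hpre := Run.of_trace hf (Nat.zero_le _) (hp j (Nat.lt_succ_iff.mp j.isLt))
    have hsuf := Run.of_trace hf (hp i (Nat.lt_succ_iff.mp i.isLt)) le_rfl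
    rw [List.drop_zero] at hpre
    rw [List.take_length, hij] at hsuf
    exact hpre.append hsuf
  obtain ⟨i, j, hne, hij⟩ := Fintype.exists_ne_map_eq_of_card_lt
    (fun k : Fin (Fintype.card S + 1) => f (p k)) (by simp)
  rcases lt_or_gt_of_ne (Fin.val_ne_of_ne hne) with hlt | hlt
  · exact ⟨i, j, hlt, Nat.lt_succ_iff.mp j.isLt, hrun i j hij⟩
  · exact ⟨j, i, hlt, Nat.lt_succ_iff.mp i.isLt, hrun j i hij.symm⟩

end Auto

section word

variable {A : Type} (σ : ℤ → A)

/-- In `word` the index list `List.range _` is coerced to `List ℤ` through the list monad;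
this unfolds the coercion. -/
theorem word_eq_map_range (a b : ℤ) :
    word σ a b = (List.range (b - a + 1).toNat).map fun k : ℕ => σ (a + k) := by
  simp only [word, List.pure_def, List.bind_eq_flatMap, List.map_flatMap, List.map_cons,
    List.map_nil]
  rw [← List.map_eq_flatMap]

theorem word_length (a b : ℤ) : (word σ a b).length = (b - a + 1).toNat := by
  rw [word_eq_map_range, List.length_map, List.length_range]

theorem getElem_word (a b : ℤ) (k : ℕ) (hk : k < (word σ a b).length) :
    (word σ a b)[k] = σ (a + k) := by
  simp only [word_eq_map_range, List.getElem_map, List.getElem_range]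

theorem word_take_append_drop_of_periodic {d : ℕ} (hper : Function.Periodic σ (d : ℤ))
    (a b : ℤ) {c : ℕ} (hcd : c + d ≤ (word σ a b).length) :
    (word σ a b).take (c + d) ++ (word σ a b).drop c = word σ a (b + d) := by
  have hlen := word_length σ a b
  apply List.ext_getElem
  · simp only [List.length_append, List.length_take, List.length_drop, word_length]
    omega
  intro k hk _
  rw [getElem_word, List.getElem_append]
  split_ifs with hlt
  · rw [List.getElem_take, getElem_word]
  · rw [List.length_take, min_eq_left hcd] at hlt
    rw [List.getElem_drop, getElem_word, List.length_take, min_eq_left hcd, ← hper]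
    congr 1
    push_cast [Nat.sub_add_comm (not_lt.mp hlt)]
    omega

end word

theorem Auto.Accepts.word_add_of_periodic {S A : Type} [Fintype S] {M : Auto S A} {σ : ℤ → A}
    {N : ℕ} (hN : 0 < N) (hper : Function.Periodic σ (N : ℤ)) {a b : ℤ}
    (hlen : (Fintype.card S * N : ℤ) < b - a + 1) (hacc : M.Accepts (word σ a b)) :
    ∃ d : ℕ, 0 < d ∧ M.Accepts (word σ a (b + d)) := by
  obtain ⟨s, t, hs, ht, hrun⟩ := hacc
  have hcut : ∀ k ≤ Fintype.card S, k * N ≤ (word σ a b).length := by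
    intro k hk
    have := Nat.mul_le_mul_right N hk
    rw [word_length]
    omega
  obtain ⟨i, j, hij, hj, hpump⟩ := hrun.pump (· * N) hcut
  refine ⟨(j - i) * N, Nat.mul_pos (Nat.sub_pos_of_lt hij) hN, s, t, hs, ht, ?_⟩
  have hji : j * N = i * N + (j - i) * N := by rw [← Nat.add_mul, Nat.add_sub_cancel' hij.le]
  rw [← word_take_append_drop_of_periodic σ (hper.nat_mul (j - i)) a b
    (hji ▸ hcut j hj), ← hji]
  exact hpump

/-- pumping-style bound on maximal substrings.
If `σ` is a bi-infinite string of period `N` and `m` bounds the number of states of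
each automaton `D i`, then every maximal substring `σ_{a,b}` of `σ` (maximal with
respect to inclusion among the finite substrings accepted by some `D i`) has length
at most `m·N` — unless every finite substring of `σ` is accepted, i.e. the unique
maximal substring is the whole bi-infinite string `σ` itself. -/
theorem stmt0 {A : Type} (σ : ℤ → A) (N : ℕ) (hN : 0 < N)
    (hper : ∀ i : ℤ, σ (i + (N : ℤ)) = σ i)
    (n : ℕ) (S : Fin n → Type) [∀ i, Fintype (S i)]
    (D : ∀ i, Auto (S i) A) (m : ℕ)
    (hm : ∀ i, Fintype.card (S i) ≤ m)
    (Accepted : ℤ → ℤ → Prop)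
    (hAcc : ∀ a b, Accepted a b ↔ a ≤ b ∧ ∃ i, (D i).Accepts (word σ a b)) :
    (∀ a b : ℤ, Accepted a b →
        (∀ a' b', Accepted a' b' → a' ≤ a → b ≤ b' → a' = a ∧ b' = b) →
        b - a + 1 ≤ (m : ℤ) * N) ∨
      (∀ a b : ℤ, a ≤ b → Accepted a b) := by
  refine Or.inl fun a b hacc hmax => ?_
  by_contra! hlen
  obtain ⟨hab, i, hacc_i⟩ := (hAcc a b).1 hacc
  have hcard : (Fintype.card (S i) * N : ℤ) < b - a + 1 :=
    lt_of_le_of_lt (by exact_mod_cast Nat.mul_le_mul_right N (hm i)) hlen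
  obtain ⟨d, hd, hacc'⟩ := hacc_i.word_add_of_periodic hN hper hcard
  have hext := hmax a (b + d) ((hAcc a (b + d)).2 ⟨by omega, i, hacc'⟩) le_rfl (by omega)
  omega
end

section
/- Let D be a finite automaton and for each state s let Γ(s) be a finite partition of Σ* into regular languages. Then there exists a finite refinement Γ''(s) of each Γ(s), common across states, that is compatible with D's transition structure: whenever (s, a, s') ∈ T(D) and E ∈ Γ''(s), there is a unique E' ∈ Γ''(s') with Lang(E)·a ⊆ Lang(E'). In particular, the iterative refinement algorithm (repeatedly disjoining the families {(E·a) ∩ E' : E ∈ Γ(s), E' ∈ Γ(s')} over transitions) terminates, producing the coarsest such compatible refinement. -/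
theorem Set.Finite.range_of_eq_imp {α β γ : Type*} {f : α → β} {g : α → γ}
    (hf : (Set.range f).Finite) (h : ∀ x y, f x = f y → g x = g y) : (Set.range g).Finite := by
  have := hf.to_subtype
  refine (Set.finite_range fun p : Set.range f => g p.2.choose).subset ?_
  rintro _ ⟨x, rfl⟩
  exact ⟨⟨f x, x, rfl⟩, h _ _ (Exists.choose_spec (p := fun y => f y = f x) ⟨x, rfl⟩)⟩

namespace Language

variable {α : Type*}

theorem finite_range_pi_leftQuotient {ι : Type*} [Finite ι] {L : ι → Language α}
    (hL : ∀ i, (L i).IsRegular) : (Set.range fun x i => (L i).leftQuotient x).Finite :=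
  (Set.Finite.pi' fun i => (hL i).finite_range_leftQuotient).subset <| by
    rintro _ ⟨x, rfl⟩ i
    exact ⟨x, rfl⟩

theorem IsRegular.of_saturated {ι : Type*} [Finite ι] {L : ι → Language α}
    (hL : ∀ i, (L i).IsRegular) {K : Language α}
    (hK : ∀ x y, (∀ i, (L i).leftQuotient x = (L i).leftQuotient y) → (x ∈ K ↔ y ∈ K)) :
    K.IsRegular := by
  refine .of_finite_range_leftQuotient <| (finite_range_pi_leftQuotient hL).range_of_eq_imp ?_
  intro x y hxy
  ext z
  refine hK _ _ fun i => ?_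
  rw [leftQuotient_append, leftQuotient_append, congrFun hxy i]

end Language

theorem Set.mem_iff_of_pairwise_inter_eq_empty {α : Type*} {P : Finset (Set α)}
    (hP : ∀ E ∈ P, ∀ E' ∈ P, E ≠ E' → E ∩ E' = ∅) {E E' : Set α} (hE : E ∈ P) (hE' : E' ∈ P)
    {x y : α} (hx : x ∈ E') (hy : y ∈ E') : x ∈ E ↔ y ∈ E := by
  by_cases h : E = E'
  · subst h
    exact iff_of_true hx hy
  · have hdisj := hP E hE E' hE' h
    exact iff_of_false (fun hxE => hdisj.subset ⟨hxE, hx⟩) (fun hyE => hdisj.subset ⟨hyE, hy⟩)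

namespace Auto

variable {S A : Type} (D : Auto S A) (Γ : S → Finset (Set (List A)))

def futureSetoid (s : S) : Setoid (List A) where
  r u v := ∀ t w, D.Run s w t → ∀ E ∈ Γ t, (u ++ w ∈ E ↔ v ++ w ∈ E)
  iseqv :=
    { refl := fun _ _ _ _ _ _ => Iff.rfl
      symm := fun h t w hw E hE => (h t w hw E hE).symm
      trans := fun h h' t w hw E hE => (h t w hw E hE).trans (h' t w hw E hE) }

variable {D Γ}

theorem futureSetoid_of_leftQuotient_eq {s : S} {u v : List A}
    (h : ∀ i : Σ t, Γ t, Language.leftQuotient i.2.1 u = Language.leftQuotient i.2.1 v) :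
    D.futureSetoid Γ s u v :=
  fun t w _ E hE => Set.ext_iff.mp (h ⟨t, E, hE⟩) w

theorem mem_iff_of_futureSetoid {s : S} {u v : List A} (h : D.futureSetoid Γ s u v)
    {E : Set (List A)} (hE : E ∈ Γ s) : u ∈ E ↔ v ∈ E := by
  simpa using h s [] (Run.nil s) E hE

theorem futureSetoid_append_singleton {s s' : S} {a : A} (hsa : (s, a, s') ∈ D.trans)
    {u v : List A} (h : D.futureSetoid Γ s u v) :
    D.futureSetoid Γ s' (u ++ [a]) (v ++ [a]) := fun t w hw E hE => by
  simpa using h t (a :: w) (Run.cons hsa hw) E hE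

variable (D Γ) in
theorem finite_classes_futureSetoid [Finite S]
    (hreg : ∀ s, ∀ E ∈ Γ s, Language.IsRegular (E : Language A)) (s : S) :
    (D.futureSetoid Γ s).classes.Finite := by
  refine ((Language.finite_range_pi_leftQuotient (L := fun i : Σ t, Γ t => (i.2.1 : Language A))
    fun i => hreg _ _ i.2.2).range_of_eq_imp (g := fun y => {x | D.futureSetoid Γ s x y})
    fun y y' h => ?_).subset ?_
  · ext x
    have hyy' : D.futureSetoid Γ s y y' := futureSetoid_of_leftQuotient_eq (congrFun h)
    exact ⟨fun hx => Setoid.trans' _ hx hyy', fun hx => Setoid.trans' _ hx (Setoid.symm' _ hyy')⟩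
  · rintro _ ⟨y, rfl⟩
    exact ⟨y, rfl⟩

theorem isRegular_of_mem_classes_futureSetoid [Finite S]
    (hreg : ∀ s, ∀ E ∈ Γ s, Language.IsRegular (E : Language A)) {s : S} {E : Set (List A)}
    (hE : E ∈ (D.futureSetoid Γ s).classes) : Language.IsRegular (E : Language A) := by
  obtain ⟨y, rfl⟩ := hE
  refine Language.IsRegular.of_saturated (L := fun i : Σ t, Γ t => (i.2.1 : Language A))
    (fun i => hreg _ _ i.2.2) fun x x' h => ?_
  have hxx' : D.futureSetoid Γ s x x' := futureSetoid_of_leftQuotient_eq h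
  exact ⟨fun hx => Setoid.trans' _ (Setoid.symm' _ hxx') hx, fun hx' => Setoid.trans' _ hxx' hx'⟩

theorem existsUnique_mem_classes_futureSetoid_image_subset {s s' : S} {a : A}
    (hsa : (s, a, s') ∈ D.trans) {E : Set (List A)} (hE : E ∈ (D.futureSetoid Γ s).classes) :
    ∃! E', E' ∈ (D.futureSetoid Γ s').classes ∧ ((· ++ [a]) '' E) ⊆ E' := by
  obtain ⟨u, rfl⟩ := hE
  refine ⟨{x | D.futureSetoid Γ s' x (u ++ [a])}, ⟨Setoid.mem_classes _ _, ?_⟩, ?_⟩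
  · rintro _ ⟨v, hv, rfl⟩
    exact futureSetoid_append_singleton hsa hv
  · rintro E' ⟨hE', hsub⟩
    exact Setoid.eq_of_mem_classes hE' (hsub ⟨u, (D.futureSetoid Γ s).refl' u, rfl⟩)
      (Setoid.mem_classes _ _) ((D.futureSetoid Γ s').refl' _)

theorem Run.exists_mem_append_of_compatible {Δ : S → Finset (Set (List A))}
    (hΔ : ∀ s a s', (s, a, s') ∈ D.trans → ∀ E ∈ Δ s, ∃ E' ∈ Δ s', ((· ++ [a]) '' E) ⊆ E')
    {s t : S} {w : List A} (hw : D.Run s w t)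
    {E : Set (List A)} (hE : E ∈ Δ s) {x y : List A} (hx : x ∈ E) (hy : y ∈ E) :
    ∃ F ∈ Δ t, x ++ w ∈ F ∧ y ++ w ∈ F := by
  induction hw generalizing E x y with
  | nil s => exact ⟨E, hE, by simpa using hx, by simpa using hy⟩
  | @cons s _ _ a w hsa _ ih =>
    obtain ⟨E', hE', hsub⟩ := hΔ _ _ _ hsa E hE
    obtain ⟨F, hF, hxF, hyF⟩ := ih hE' (hsub ⟨x, hx, rfl⟩) (hsub ⟨y, hy, rfl⟩)
    exact ⟨F, hF, by simpa using hxF, by simpa using hyF⟩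

theorem futureSetoid_of_mem_compatible {Δ : S → Finset (Set (List A))}
    (hΔ : ∀ s a s', (s, a, s') ∈ D.trans → ∀ E ∈ Δ s, ∃ E' ∈ Δ s', ((· ++ [a]) '' E) ⊆ E')
    (hdisj : ∀ s, ∀ E ∈ Γ s, ∀ E' ∈ Γ s, E ≠ E' → E ∩ E' = ∅)
    (hrefine : ∀ s, ∀ E ∈ Δ s, ∃ E0 ∈ Γ s, E ⊆ E0) {s : S} {E : Set (List A)} (hE : E ∈ Δ s)
    {u v : List A} (hu : u ∈ E) (hv : v ∈ E) : D.futureSetoid Γ s u v := by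
  intro t w hw E0 hE0
  obtain ⟨F, hF, huF, hvF⟩ := Run.exists_mem_append_of_compatible hΔ hw hE hu hv
  obtain ⟨E0', hE0', hFsub⟩ := hrefine t F hF
  exact Set.mem_iff_of_pairwise_inter_eq_empty (hdisj t) hE0 hE0' (hFsub huF) (hFsub hvF)

end Auto

/-- existence and coarseness of the optimized refinement.
Let `D` be a finite automaton and `Γ s` a finite partition of `Σ*` into regular
languages for each state `s`. Then there are finite refinements `Γ'' s` of the
`Γ s`, still partitions of `Σ*` into (nonempty) regular languages, compatible with
`D`'s transition structure: whenever `(s, a, s') ∈ T(D)` and `E ∈ Γ'' s`, there is a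
unique `E' ∈ Γ'' s'` with `E·a ⊆ E'`. Moreover `Γ''` can be chosen coarsest: every
family `Δ` with these properties refines it. (Hence the iterative refinement
algorithm terminates, producing this coarsest compatible refinement.) -/
theorem stmt17 {S A : Type} [Fintype S] (D : Auto S A)
    (Γ : S → Finset (Set (List A)))
    (hreg : ∀ s, ∀ E ∈ Γ s, Language.IsRegular (E : Language A))
    (hcover : ∀ s, (⋃ E ∈ Γ s, E) = Set.univ)
    (hdisj : ∀ s, ∀ E ∈ Γ s, ∀ E' ∈ Γ s, E ≠ E' → E ∩ E' = ∅) :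
    ∃ Γ'' : S → Finset (Set (List A)),
      (∀ s, ∀ E ∈ Γ'' s, Set.Nonempty E) ∧
      (∀ s, (⋃ E ∈ Γ'' s, E) = Set.univ) ∧
      (∀ s, ∀ E ∈ Γ'' s, ∀ E' ∈ Γ'' s, E ≠ E' → E ∩ E' = ∅) ∧
      (∀ s, ∀ E ∈ Γ'' s, Language.IsRegular (E : Language A)) ∧
      (∀ s, ∀ E ∈ Γ'' s, ∃ E0 ∈ Γ s, E ⊆ E0) ∧
      (∀ s a s', (s, a, s') ∈ D.trans → ∀ E ∈ Γ'' s,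
        ∃! E', E' ∈ Γ'' s' ∧ ((· ++ [a]) '' E) ⊆ E') ∧
      (∀ Δ : S → Finset (Set (List A)),
        (∀ s, ∀ E ∈ Δ s, Set.Nonempty E) →
        (∀ s, (⋃ E ∈ Δ s, E) = Set.univ) →
        (∀ s, ∀ E ∈ Δ s, ∀ E' ∈ Δ s, E ≠ E' → E ∩ E' = ∅) →
        (∀ s, ∀ E ∈ Δ s, ∃ E0 ∈ Γ s, E ⊆ E0) →
        (∀ s a s', (s, a, s') ∈ D.trans → ∀ E ∈ Δ s,
          ∃! E', E' ∈ Δ s' ∧ ((· ++ [a]) '' E) ⊆ E') →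
        ∀ s, ∀ E ∈ Δ s, ∃ E'' ∈ Γ'' s, E ⊆ E'') := by
  have hfin := D.finite_classes_futureSetoid Γ hreg
  refine ⟨fun s => (hfin s).toFinset, ?_, ?_, ?_, ?_, ?_, ?_, ?_⟩ <;>
    simp only [Set.Finite.mem_toFinset]
  · exact fun s E hE => Setoid.nonempty_of_mem_partition (Setoid.isPartition_classes _) hE
  · exact fun s => Set.sUnion_eq_biUnion ▸ Setoid.sUnion_classes _
  · exact fun s E hE E' hE' hne => Set.disjoint_iff_inter_eq_empty.mp
      ((Setoid.isPartition_classes _).pairwiseDisjoint hE hE' hne)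
  · exact fun s E hE => Auto.isRegular_of_mem_classes_futureSetoid hreg hE
  · rintro s _ ⟨u, rfl⟩
    obtain ⟨E0, hE0, hu⟩ := Set.mem_iUnion₂.mp (hcover s ▸ Set.mem_univ u)
    exact ⟨E0, hE0, fun v hv => (Auto.mem_iff_of_futureSetoid hv hE0).mpr hu⟩
  · exact fun s a s' hsa E hE => Auto.existsUnique_mem_classes_futureSetoid_image_subset hsa hE
  · intro Δ hΔne _ _ hΔref hΔcomp s E hE
    obtain ⟨u, hu⟩ := hΔne s E hE
    exact ⟨_, Setoid.mem_classes _ u, fun v hv => Auto.futureSetoid_of_mem_compatible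
      (fun s a s' hsa E hE => (hΔcomp s a s' hsa E hE).exists) hdisj hΔref hE hv hu⟩
end
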